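/- Let d ≥ 1, N ≥ 1, and let ρ₀,…,ρ_N be Borel probability measures on ℝ^d with finite second moments. If γ̂ minimizes Σ_{i=0}^{N−1} ∫ c(x_i, x_{i+1}, v_i, v_{i+1}) dγ over all γ ∈ Γ(ρ₀,…,ρ_N), then its position marginal π̂ = (X₀,…,X_N)_#γ̂ minimizes ∫ 𝒞(x₀,…,x_N) dπ over all π ∈ Π(ρ₀,…,ρ_N). -/

import Mathlib

/-!
`c(x, x', v, v')` is the energy `∫₀¹ ‖H''‖²` of the cubic Hermite interpolant `H` of the data,
and `H''` is affine, so integrating by parts twice shows `∫ ⟪H'', X''⟫ = c` for every curve `X`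
with the same end data; hence `c ≤ ∫ ‖X''‖²`. Summing over the unit intervals,
`𝒞(x) ≥ min_v Σᵢ c(xᵢ, xᵢ₊₁, vᵢ, vᵢ₊₁)`. The discrete energy is a positive definite quadratic
in `v`, so its minimizer `v*(x)` is linear in `x`, and its first-order condition says that
consecutive Hermite pieces have matching accelerations at the knots: they glue to a `C²` curve,
so equality holds. Then `∫ 𝒞 dπ̂ ≤ ∫ Σc dγ̂ ≤ ∫ Σc d(id, v*)₊π = ∫ 𝒞 dπ` for every `π ∈ Π`.
-/

open MeasureTheory

noncomputable section

/-- The cost `c(x, x', v, v') = 12‖x'−x−v‖² − 12⟨x'−x−v, v'−v⟩ + 4‖v'−v‖²`. -/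
def splineCost {d : ℕ} (x x' v v' : EuclideanSpace ℝ (Fin d)) : ℝ :=
  12 * ‖x' - x - v‖ ^ 2 - 12 * (inner ℝ (x' - x - v) (v' - v) : ℝ) + 4 * ‖v' - v‖ ^ 2

/-- `𝒞(x₀,…,x_N)`: the infimum of `∫₀^N ‖X''‖²` over all C² curves `X` with
`X(i) = x i` for every `i = 0, …, N`. -/
def multiCost {d : ℕ} (N : ℕ) (x : Fin (N + 1) → EuclideanSpace ℝ (Fin d)) : ℝ :=
  sInf { y : ℝ | ∃ X : ℝ → EuclideanSpace ℝ (Fin d), ContDiff ℝ 2 X ∧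
      (∀ i : Fin (N + 1), X ((i : ℕ) : ℝ) = x i) ∧
      y = ∫ t in (0:ℝ)..(N:ℝ), ‖deriv (deriv X) t‖ ^ 2 }

section Calculus

variable {F G H : Type*} [NormedAddCommGroup F] [NormedSpace ℝ F] [NormedAddCommGroup G]
  [NormedSpace ℝ G] [NormedAddCommGroup H] [NormedSpace ℝ H]

theorem integral_bilinear_affine_deriv_deriv [CompleteSpace H] (B : F →L[ℝ] G →L[ℝ] H)
    {X : ℝ → G} (hX : ContDiff ℝ 2 X) (a c : F) (k : ℝ) :
    ∫ t in k..k + 1, B (a + (t - k) • c) (deriv (deriv X) t)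
      = B (a + c) (deriv X (k + 1)) - B a (deriv X k) - B c (X (k + 1) - X k) := by
  have hX1 : ContDiff ℝ 1 (deriv X) := hX.deriv'
  have hderiv : ∀ t, HasDerivAt (fun t => B (a + (t - k) • c) (deriv X t) - B c (X t))
      (B (a + (t - k) • c) (deriv (deriv X) t)) t := fun t => by
    have hL : HasDerivAt (fun t : ℝ => a + (t - k) • c) c t := by
      simpa using (((hasDerivAt_id t).sub_const k).smul_const c).const_add a
    have h1 := B.hasDerivAt_of_bilinear (fun _ => hL)
      (fun _ => (hX1.differentiable one_ne_zero t).hasDerivAt)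
    have h2 := (B c).hasFDerivAt.comp_hasDerivAt t ((hX.differentiable two_ne_zero) t).hasDerivAt
    exact (h1.sub h2).congr_deriv (by simp)
  have hcont : Continuous fun t => B (a + (t - k) • c) (deriv (deriv X) t) := by
    have := hX1.continuous_deriv le_rfl
    fun_prop
  rw [intervalIntegral.integral_eq_sub_of_hasDerivAt (fun t _ => hderiv t)
    (hcont.intervalIntegrable _ _)]
  simp only [add_sub_cancel_left, sub_self, one_smul, zero_smul, add_zero, map_sub]
  abel

theorem integral_bilinear_affine_affine [CompleteSpace H] (B : F →L[ℝ] G →L[ℝ] H)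
    (a₁ c₁ : F) (a₂ c₂ : G) (k : ℝ) :
    ∫ t in k..k + 1, B (a₁ + (t - k) • c₁) (a₂ + (t - k) • c₂)
      = B a₁ a₂ + (2:ℝ)⁻¹ • (B a₁ c₂ + B c₁ a₂) + (3:ℝ)⁻¹ • B c₁ c₂ := by
  have hexpand : ∀ s : ℝ, B (a₁ + s • c₁) (a₂ + s • c₂)
      = B a₁ a₂ + s • (B a₁ c₂ + B c₁ a₂) + s ^ 2 • B c₁ c₂ := fun s => by
    simp only [map_add, map_smul, add_apply, smul_apply]
    module
  rw [intervalIntegral.integral_comp_sub_right (fun s => B (a₁ + s • c₁) (a₂ + s • c₂))]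
  simp only [hexpand, sub_self, add_sub_cancel_left]
  rw [intervalIntegral.integral_add (Continuous.intervalIntegrable (by fun_prop) _ _)
      (Continuous.intervalIntegrable (by fun_prop) _ _),
    intervalIntegral.integral_add (Continuous.intervalIntegrable (by fun_prop) _ _)
      (Continuous.intervalIntegrable (by fun_prop) _ _),
    intervalIntegral.integral_const, intervalIntegral.integral_smul_const,
    intervalIntegral.integral_smul_const, integral_id, integral_pow]
  norm_num

theorem integral_zero_natCast_eq_sum {f : ℝ → H} (hf : Continuous f) (N : ℕ) :
    ∫ t in (0:ℝ)..N, f t = ∑ i : Fin N, ∫ t in ((i : ℕ) : ℝ)..(i : ℕ) + 1, f t := by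
  rw [Fin.sum_univ_eq_sum_range (fun k => ∫ t in (k : ℝ)..k + 1, f t)]
  have h := intervalIntegral.sum_integral_adjacent_intervals (a := fun k : ℕ => (k : ℝ)) (n := N)
    fun k _ => hf.intervalIntegrable (μ := volume) _ _
  push_cast at h
  exact h.symm

theorem exists_contDiff_two_deriv_deriv_eq [CompleteSpace H] {g : ℝ → H} (hg : Continuous g)
    (x₀ v₀ : H) :
    ∃ X : ℝ → H, ContDiff ℝ 2 X ∧ X 0 = x₀ ∧ deriv X 0 = v₀ ∧ deriv (deriv X) = g := by
  set P : ℝ → H := fun t => v₀ + ∫ u in (0:ℝ)..t, g u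
  have hP : ∀ t, HasDerivAt P (g t) t := fun t =>
    ((hg.integral_hasStrictDerivAt 0 t).hasDerivAt).const_add v₀
  have hPc : Continuous P := continuous_iff_continuousAt.2 fun t => (hP t).continuousAt
  have hX : ∀ t, HasDerivAt (fun t => x₀ + ∫ s in (0:ℝ)..t, P s) (P t) t := fun t =>
    ((hPc.integral_hasStrictDerivAt 0 t).hasDerivAt).const_add x₀
  have hX' : deriv (fun t => x₀ + ∫ s in (0:ℝ)..t, P s) = P := funext fun t => (hX t).deriv
  have hP' : deriv P = g := funext fun t => (hP t).deriv
  refine ⟨fun t => x₀ + ∫ s in (0:ℝ)..t, P s, ?_, by simp, by simp [hX', P], by rw [hX', hP']⟩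
  rw [show (2 : WithTop ℕ∞) = 1 + 1 from rfl, contDiff_succ_iff_deriv, hX', contDiff_one_iff_deriv,
    hP']
  exact ⟨fun t => (hX t).differentiableAt, by simp, fun t => (hP t).differentiableAt, hg⟩

end Calculus

section InnerProduct

variable {V : Type*} [NormedAddCommGroup V] [InnerProductSpace ℝ V]

theorem integral_norm_sq_affine (a c : V) (k : ℝ) :
    ∫ t in k..k + 1, ‖a + (t - k) • c‖ ^ 2 = ‖a‖ ^ 2 + inner ℝ a c + ‖c‖ ^ 2 / 3 := by
  have h : ∫ t in k..k + 1, inner ℝ (a + (t - k) • c) (a + (t - k) • c)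
      = inner ℝ a a + (2:ℝ)⁻¹ • (inner ℝ a c + inner ℝ c a) + (3:ℝ)⁻¹ • inner ℝ c c :=
    integral_bilinear_affine_affine (innerSL ℝ) a c a c k
  simp only [real_inner_self_eq_norm_sq, smul_eq_mul, real_inner_comm a c] at h
  rw [h]
  ring

theorem sum_inner_sum_pi_single {ι κ : Type*} [Fintype ι] [Fintype κ] [DecidableEq κ]
    (f : ι → κ) (c : ι → V) (η : κ → V) :
    ∑ j, inner ℝ ((∑ i, Pi.single (f i) (c i) : κ → V) j) (η j) = ∑ i, inner ℝ (c i) (η (f i)) := by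
  simp only [Finset.sum_apply, sum_inner]
  rw [Finset.sum_comm]
  refine Finset.sum_congr rfl fun i _ => ?_
  rw [Finset.sum_eq_single (f i) (fun j _ hj => by simp [hj]) (by simp)]
  simp

end InnerProduct

section Hermite

variable {d : ℕ}

local notation "E" => EuclideanSpace ℝ (Fin d)

/-- Second derivative at time `s` of the cubic `H` on `[0, 1]` with `H 0 = x`, `H 1 = x'`,
`H' 0 = v`, `H' 1 = v'`. -/
def hermiteAcc (x x' v v' : E) (s : ℝ) : E :=
  (6 - 12 * s) • (x' - x) + (6 * s - 4) • v + (6 * s - 2) • v'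

lemma hermiteAcc_eq (x x' v v' : E) (s : ℝ) :
    hermiteAcc x x' v v' s = hermiteAcc x x' v v' 0
      + s • (hermiteAcc x x' v v' 1 - hermiteAcc x x' v v' 0) := by
  simp only [hermiteAcc]; module

lemma hermiteAcc_add (x₁ x₁' v₁ v₁' x₂ x₂' v₂ v₂' : E) (s : ℝ) :
    hermiteAcc (x₁ + x₂) (x₁' + x₂') (v₁ + v₂) (v₁' + v₂') s
      = hermiteAcc x₁ x₁' v₁ v₁' s + hermiteAcc x₂ x₂' v₂ v₂' s := by
  simp only [hermiteAcc]; module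

lemma hermiteAcc_smul (c : ℝ) (x x' v v' : E) (s : ℝ) :
    hermiteAcc (c • x) (c • x') (c • v) (c • v') s = c • hermiteAcc x x' v v' s := by
  simp only [hermiteAcc]; module

lemma integral_norm_sq_hermiteAcc (x x' v v' : E) (k : ℝ) :
    ∫ t in k..k + 1, ‖hermiteAcc x x' v v' (t - k)‖ ^ 2 = splineCost x x' v v' := by
  simp only [hermiteAcc_eq _ _ _ _ (_ - k), integral_norm_sq_affine]
  simp only [hermiteAcc, splineCost, ← real_inner_self_eq_norm_sq, inner_sub_left,
    inner_sub_right, inner_add_left, inner_add_right, real_inner_smul_left, real_inner_smul_right]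
  simp only [real_inner_comm]
  ring

lemma inner_hermiteAcc_sub_eq_splineCost (x x' v v' : E) :
    inner ℝ (hermiteAcc x x' v v' 1) v' - inner ℝ (hermiteAcc x x' v v' 0) v
      - inner ℝ (hermiteAcc x x' v v' 1 - hermiteAcc x x' v v' 0) (x' - x)
      = splineCost x x' v v' := by
  simp only [hermiteAcc, splineCost, ← real_inner_self_eq_norm_sq, inner_sub_left,
    inner_sub_right, inner_add_left, real_inner_smul_left]
  simp only [real_inner_comm]
  ring

lemma splineCost_add_velocity (x x' v v' a b : E) :
    splineCost x x' (v + a) (v' + b) = splineCost x x' v v'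
      + 2 * (inner ℝ (hermiteAcc x x' v v' 1) b - inner ℝ (hermiteAcc x x' v v' 0) a)
      + splineCost 0 0 a b := by
  simp only [hermiteAcc, splineCost, ← real_inner_self_eq_norm_sq, inner_sub_left,
    inner_sub_right, inner_add_left, inner_add_right, inner_zero_left, inner_zero_right,
    real_inner_smul_left]
  simp only [real_inner_comm]
  ring

lemma splineCost_zero_zero (a b : E) :
    splineCost 0 0 a b = 3 * ‖a + b‖ ^ 2 + ‖b - a‖ ^ 2 := by
  simp only [splineCost, ← real_inner_self_eq_norm_sq, inner_sub_left, inner_sub_right,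
    inner_add_left, inner_add_right, sub_zero, inner_zero_left, inner_zero_right]
  simp only [real_inner_comm]
  ring

lemma splineCost_zero_zero_nonneg (a b : E) : 0 ≤ splineCost 0 0 a b := by
  rw [splineCost_zero_zero]; positivity

lemma splineCost_zero_zero_eq_zero {a b : E} (h : splineCost 0 0 a b = 0) : a = 0 ∧ b = 0 := by
  rw [splineCost_zero_zero] at h
  have hsum : a + b = 0 := by
    rw [← norm_eq_zero]; nlinarith [sq_nonneg ‖a + b‖, sq_nonneg ‖b - a‖, norm_nonneg (a + b)]
  have hdiff : b - a = 0 := by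
    rw [← norm_eq_zero]; nlinarith [sq_nonneg ‖a + b‖, sq_nonneg ‖b - a‖, norm_nonneg (b - a)]
  constructor
  · rw [show a = (2:ℝ)⁻¹ • ((a + b) - (b - a)) by module, hsum, hdiff]; simp
  · rw [show b = (2:ℝ)⁻¹ • ((a + b) + (b - a)) by module, hsum, hdiff]; simp

end Hermite

section DiscreteEnergy

variable {d N : ℕ}

local notation "E" => EuclideanSpace ℝ (Fin d)

def splineEnergy (N : ℕ) (x v : Fin (N + 1) → E) : ℝ :=
  ∑ i : Fin N, splineCost (x i.castSucc) (x i.succ) (v i.castSucc) (v i.succ)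

/-- At each knot, the acceleration with which the Hermite cubic of the incoming interval ends
(`0` at the first knot). -/
def accIn (x v : Fin (N + 1) → E) : Fin (N + 1) → E :=
  ∑ i : Fin N, Pi.single i.succ (hermiteAcc (x i.castSucc) (x i.succ) (v i.castSucc) (v i.succ) 1)

/-- At each knot, the acceleration with which the Hermite cubic of the outgoing interval starts
(`0` at the last knot). -/
def accOut (x v : Fin (N + 1) → E) : Fin (N + 1) → E :=
  ∑ i : Fin N,
    Pi.single i.castSucc (hermiteAcc (x i.castSucc) (x i.succ) (v i.castSucc) (v i.succ) 0)

lemma accIn_succ (x v : Fin (N + 1) → E) (i : Fin N) :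
    accIn x v i.succ = hermiteAcc (x i.castSucc) (x i.succ) (v i.castSucc) (v i.succ) 1 := by
  simp [accIn, Finset.sum_apply, Pi.single_apply]

lemma accOut_castSucc (x v : Fin (N + 1) → E) (i : Fin N) :
    accOut x v i.castSucc = hermiteAcc (x i.castSucc) (x i.succ) (v i.castSucc) (v i.succ) 0 := by
  simp [accOut, Finset.sum_apply, Pi.single_apply]

/-- Half the gradient of `splineEnergy N x` at `v`; its vanishing makes the Hermite cubics
join up to a `C²` curve. -/
def accJump : ((Fin (N + 1) → E) × (Fin (N + 1) → E)) →ₗ[ℝ] Fin (N + 1) → E where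
  toFun p := accIn p.1 p.2 - accOut p.1 p.2
  map_add' p q := by
    simp only [accIn, accOut, Prod.fst_add, Prod.snd_add, Pi.add_apply, hermiteAcc_add,
      Pi.single_add, Finset.sum_add_distrib]
    abel
  map_smul' c p := by
    simp only [accIn, accOut, Prod.smul_fst, Prod.smul_snd, Pi.smul_apply, hermiteAcc_smul,
      Pi.single_smul, ← Finset.smul_sum, RingHom.id_apply, smul_sub]

lemma splineEnergy_add_velocity (x v η : Fin (N + 1) → E) :
    splineEnergy N x (v + η) = splineEnergy N x v
      + 2 * ∑ j, inner ℝ (accJump (x, v) j) (η j) + splineEnergy N 0 η := by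
  have hpair : ∑ j, inner ℝ (accJump (x, v) j) (η j)
      = ∑ i : Fin N,
        (inner ℝ (hermiteAcc (x i.castSucc) (x i.succ) (v i.castSucc) (v i.succ) 1) (η i.succ)
        - inner ℝ (hermiteAcc (x i.castSucc) (x i.succ) (v i.castSucc) (v i.succ) 0)
            (η i.castSucc)) := by
    simp only [accJump, LinearMap.coe_mk, AddHom.coe_mk, Pi.sub_apply, inner_sub_left,
      Finset.sum_sub_distrib, accIn, accOut, sum_inner_sum_pi_single]
  simp only [splineEnergy, hpair, Pi.add_apply, Pi.zero_apply, splineCost_add_velocity,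
    Finset.mul_sum, ← Finset.sum_add_distrib]

lemma splineEnergy_zero_nonneg (η : Fin (N + 1) → E) : 0 ≤ splineEnergy N 0 η :=
  Finset.sum_nonneg fun _ _ => splineCost_zero_zero_nonneg _ _

lemma eq_zero_of_splineEnergy_zero_eq_zero (hN : N ≠ 0) {η : Fin (N + 1) → E}
    (h : splineEnergy N 0 η = 0) : η = 0 := by
  obtain ⟨M, rfl⟩ := Nat.exists_eq_succ_of_ne_zero hN
  have hcost : ∀ i : Fin (M + 1), η i.castSucc = 0 ∧ η i.succ = 0 := fun i =>
    splineCost_zero_zero_eq_zero ((Finset.sum_eq_zero_iff_of_nonneg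
      fun _ _ => splineCost_zero_zero_nonneg _ _).1 h i (Finset.mem_univ i))
  funext j
  induction j using Fin.lastCases with
  | last => simpa using (hcost (Fin.last M)).2
  | cast i => exact (hcost i).1

lemma accJump_inr_injective (hN : N ≠ 0) :
    Function.Injective (accJump ∘ₗ LinearMap.inr ℝ (Fin (N + 1) → E) (Fin (N + 1) → E)) := by
  rw [← LinearMap.ker_eq_bot, LinearMap.ker_eq_bot']
  intro η hη
  have hjump : accJump (0, η) = 0 := hη
  -- expanding the energy of `η - η = 0` around `η`
  have hexpand := splineEnergy_add_velocity (0 : Fin (N + 1) → E) η (-η)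
  simp only [hjump, add_neg_cancel, Pi.zero_apply, inner_zero_left, Finset.sum_const_zero,
    mul_zero, add_zero] at hexpand
  have hzero : splineEnergy N (0 : Fin (N + 1) → E) 0 = 0 := by simp [splineEnergy, splineCost]
  exact eq_zero_of_splineEnergy_zero_eq_zero hN (le_antisymm
    (by linarith [splineEnergy_zero_nonneg (-η)]) (splineEnergy_zero_nonneg η))

/-- The minimizing velocities of `splineEnergy N x`, which depend linearly on `x`. -/
def optimalVelocity (hN : N ≠ 0) : (Fin (N + 1) → E) →ₗ[ℝ] Fin (N + 1) → E :=
  -((LinearEquiv.ofInjectiveEndo _ (accJump_inr_injective hN)).symm.toLinearMap ∘ₗ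
    accJump ∘ₗ LinearMap.inl ℝ _ _)

lemma accJump_optimalVelocity (hN : N ≠ 0) (x : Fin (N + 1) → E) :
    accJump (x, optimalVelocity hN x) = 0 := by
  set e := LinearEquiv.ofInjectiveEndo _ (accJump_inr_injective (d := d) hN)
  have hsolve : accJump (0, optimalVelocity hN x) = -accJump (x, 0) := by
    have hV : optimalVelocity hN x = -e.symm (accJump (x, 0)) := rfl
    change e (optimalVelocity hN x) = _
    rw [hV, map_neg, e.apply_symm_apply]
  rw [show (x, optimalVelocity hN x) = (x, 0) + (0, optimalVelocity hN x) by simp, map_add,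
    hsolve, add_neg_cancel]

lemma splineEnergy_optimalVelocity_le (hN : N ≠ 0) (x v : Fin (N + 1) → E) :
    splineEnergy N x (optimalVelocity hN x) ≤ splineEnergy N x v := by
  have hexpand := splineEnergy_add_velocity x (optimalVelocity hN x) (v - optimalVelocity hN x)
  simp only [accJump_optimalVelocity, Pi.zero_apply, inner_zero_left, Finset.sum_const_zero,
    mul_zero, add_zero, add_sub_cancel] at hexpand
  linarith [splineEnergy_zero_nonneg (v - optimalVelocity hN x)]

lemma continuous_splineEnergy :
    Continuous fun p : (Fin (N + 1) → E) × (Fin (N + 1) → E) => splineEnergy N p.1 p.2 := by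
  unfold splineEnergy splineCost
  fun_prop

end DiscreteEnergy

section Curves

variable {d N : ℕ}

local notation "E" => EuclideanSpace ℝ (Fin d)

lemma integral_inner_hermiteAcc_deriv_deriv {X : ℝ → E} (hX : ContDiff ℝ 2 X) (k : ℝ) :
    ∫ t in k..k + 1,
        inner ℝ (hermiteAcc (X k) (X (k + 1)) (deriv X k) (deriv X (k + 1)) (t - k))
          (deriv (deriv X) t)
      = splineCost (X k) (X (k + 1)) (deriv X k) (deriv X (k + 1)) := by
  set A := hermiteAcc (X k) (X (k + 1)) (deriv X k) (deriv X (k + 1))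
  have hparts : ∫ t in k..k + 1, inner ℝ (A 0 + (t - k) • (A 1 - A 0)) (deriv (deriv X) t)
      = inner ℝ (A 0 + (A 1 - A 0)) (deriv X (k + 1)) - inner ℝ (A 0) (deriv X k)
        - inner ℝ (A 1 - A 0) (X (k + 1) - X k) :=
    integral_bilinear_affine_deriv_deriv (innerSL ℝ) hX _ _ k
  simp only [A, ← hermiteAcc_eq, add_sub_cancel] at hparts
  rw [hparts, inner_hermiteAcc_sub_eq_splineCost]

lemma splineCost_le_integral_norm_sq_deriv_deriv {X : ℝ → E} (hX : ContDiff ℝ 2 X) (k : ℝ) :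
    splineCost (X k) (X (k + 1)) (deriv X k) (deriv X (k + 1))
      ≤ ∫ t in k..k + 1, ‖deriv (deriv X) t‖ ^ 2 := by
  set L := fun t => hermiteAcc (X k) (X (k + 1)) (deriv X k) (deriv X (k + 1)) (t - k)
  have hL : Continuous L := by unfold L hermiteAcc; fun_prop
  have hX'' : Continuous (deriv (deriv X)) := hX.deriv'.continuous_deriv le_rfl
  -- `‖X'' - L‖² ≥ 0`, where `∫ ⟪L, X''⟫` and `∫ ‖L‖²` both equal the cost
  have hpointwise : ∀ t ∈ Set.Icc k (k + 1),
      2 * inner ℝ (L t) (deriv (deriv X) t) - ‖L t‖ ^ 2 ≤ ‖deriv (deriv X) t‖ ^ 2 := fun t _ => by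
    nlinarith [norm_sub_sq_real (deriv (deriv X) t) (L t),
      real_inner_comm (deriv (deriv X) t) (L t), sq_nonneg ‖deriv (deriv X) t - L t‖]
  have hmono := intervalIntegral.integral_mono_on (μ := volume) (by linarith)
    (Continuous.intervalIntegrable (by fun_prop) _ _)
    ((hX''.norm.pow 2).intervalIntegrable _ _) hpointwise
  rw [intervalIntegral.integral_sub (Continuous.intervalIntegrable (by fun_prop) _ _)
    (Continuous.intervalIntegrable (by fun_prop) _ _), intervalIntegral.integral_const_mul,
    integral_inner_hermiteAcc_deriv_deriv hX, integral_norm_sq_hermiteAcc] at hmono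
  simp only [Pi.pow_apply] at hmono
  linarith

lemma integral_norm_sq_deriv_deriv_eq_splineCost {X : ℝ → E} {k : ℝ}
    (hX'' : ∀ t ∈ Set.Icc k (k + 1), deriv (deriv X) t
      = hermiteAcc (X k) (X (k + 1)) (deriv X k) (deriv X (k + 1)) (t - k)) :
    ∫ t in k..k + 1, ‖deriv (deriv X) t‖ ^ 2
      = splineCost (X k) (X (k + 1)) (deriv X k) (deriv X (k + 1)) := by
  rw [← integral_norm_sq_hermiteAcc]
  refine intervalIntegral.integral_congr fun t ht => ?_
  rw [Set.uIcc_of_le (by linarith)] at ht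
  simp only [hX'' t ht]

lemma endpoint_eq_of_deriv_deriv_eq_hermiteAcc {X : ℝ → E} (hX : ContDiff ℝ 2 X) {k : ℝ}
    {x x' v v' : E}
    (hx : X k = x) (hv : deriv X k = v)
    (hX'' : ∀ t ∈ Set.Icc k (k + 1), deriv (deriv X) t = hermiteAcc x x' v v' (t - k)) :
    X (k + 1) = x' ∧ deriv X (k + 1) = v' := by
  -- test `X''` against the weights `1` and `k + 1 - t`
  have hmoment : ∀ α β : ℝ,
      (α + β) • deriv X (k + 1) - α • v - β • (X (k + 1) - x)
        = α • hermiteAcc x x' v v' 0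
          + (2:ℝ)⁻¹ • (α • (hermiteAcc x x' v v' 1 - hermiteAcc x x' v v' 0)
            + β • hermiteAcc x x' v v' 0)
          + (3:ℝ)⁻¹ • (β • (hermiteAcc x x' v v' 1 - hermiteAcc x x' v v' 0)) := fun α β => by
    set A := hermiteAcc x x' v v'
    have hparts : ∫ t in k..k + 1, (α + (t - k) • β) • deriv (deriv X) t
        = (α + β) • deriv X (k + 1) - α • deriv X k - β • (X (k + 1) - X k) :=
      integral_bilinear_affine_deriv_deriv (ContinuousLinearMap.lsmul ℝ ℝ) hX α β k
    have hpoly : ∫ t in k..k + 1, (α + (t - k) • β) • (A 0 + (t - k) • (A 1 - A 0))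
        = α • A 0 + (2:ℝ)⁻¹ • (α • (A 1 - A 0) + β • A 0) + (3:ℝ)⁻¹ • (β • (A 1 - A 0)) :=
      integral_bilinear_affine_affine (ContinuousLinearMap.lsmul ℝ ℝ) α β _ _ k
    rw [← hpoly, ← hx, ← hv, ← hparts]
    refine intervalIntegral.integral_congr fun t ht => ?_
    rw [Set.uIcc_of_le (by linarith)] at ht
    simp only [hX'' t ht, A, ← hermiteAcc_eq]
  have hvel := hmoment 1 0
  have hpos := hmoment 1 (-1)
  simp only [hermiteAcc] at hvel hpos
  constructor
  · linear_combination (norm := module) hpos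
  · linear_combination (norm := module) hvel

end Curves

section Interpolation

variable {V : Type*} [NormedAddCommGroup V] [NormedSpace ℝ V] {N : ℕ}

def hatInterp (w : Fin (N + 1) → V) (t : ℝ) : V :=
  ∑ j : Fin (N + 1), max 0 (1 - |t - (j : ℕ)|) • w j

lemma continuous_hatInterp (w : Fin (N + 1) → V) : Continuous (hatInterp w) := by
  unfold hatInterp; fun_prop

lemma hatInterp_eq_of_mem_Icc (w : Fin (N + 1) → V) (i : Fin N) {t : ℝ}
    (ht : t ∈ Set.Icc ((i : ℕ) : ℝ) ((i : ℕ) + 1)) :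
    hatInterp w t = w i.castSucc + (t - (i : ℕ)) • (w i.succ - w i.castSucc) := by
  obtain ⟨hit, hti⟩ := ht
  rw [hatInterp, Fintype.sum_eq_add i.castSucc i.succ (Fin.castSucc_lt_succ (i := i)).ne]
  · simp only [Fin.val_castSucc, Fin.val_succ, Nat.cast_add, Nat.cast_one]
    rw [abs_of_nonneg (by linarith), abs_of_nonpos (by linarith),
      max_eq_right (by linarith), max_eq_right (by linarith)]
    module
  · rintro j ⟨hj₀, hj₁⟩
    have hj : (j : ℕ) + 1 ≤ i ∨ (i : ℕ) + 2 ≤ j := by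
      rw [Ne, Fin.ext_iff] at hj₀ hj₁
      simp only [Fin.val_castSucc, Fin.val_succ] at hj₀ hj₁
      omega
    have hfar : 1 ≤ |t - (j : ℕ)| := by
      rcases hj with hj | hj
      · have : ((j : ℕ) : ℝ) + 1 ≤ (i : ℕ) := by exact_mod_cast hj
        exact le_abs.2 (Or.inl (by linarith))
      · have : ((i : ℕ) : ℝ) + 2 ≤ (j : ℕ) := by exact_mod_cast hj
        exact le_abs.2 (Or.inr (by linarith))
    rw [max_eq_left (by linarith), zero_smul]

end Interpolation

section NaturalSpline

variable {d N : ℕ}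

local notation "E" => EuclideanSpace ℝ (Fin d)

lemma continuous_norm_sq_deriv_deriv {X : ℝ → E} (hX : ContDiff ℝ 2 X) :
    Continuous fun t => ‖deriv (deriv X) t‖ ^ 2 :=
  (hX.deriv'.continuous_deriv le_rfl).norm.pow 2

lemma splineEnergy_optimalVelocity_le_integral (hN : N ≠ 0) {x : Fin (N + 1) → E}
    {X : ℝ → E} (hX : ContDiff ℝ 2 X) (hXx : ∀ j : Fin (N + 1), X (j : ℕ) = x j) :
    splineEnergy N x (optimalVelocity hN x) ≤ ∫ t in (0:ℝ)..N, ‖deriv (deriv X) t‖ ^ 2 := by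
  calc splineEnergy N x (optimalVelocity hN x)
      ≤ splineEnergy N x (fun j => deriv X (j : ℕ)) := splineEnergy_optimalVelocity_le hN x _
    _ ≤ ∑ i : Fin N, ∫ t in ((i : ℕ) : ℝ)..(i : ℕ) + 1, ‖deriv (deriv X) t‖ ^ 2 := by
      refine Finset.sum_le_sum fun i _ => ?_
      simp only [← hXx, Fin.val_castSucc, Fin.val_succ, Nat.cast_add, Nat.cast_one]
      exact splineCost_le_integral_norm_sq_deriv_deriv hX _
    _ = ∫ t in (0:ℝ)..N, ‖deriv (deriv X) t‖ ^ 2 :=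
      (integral_zero_natCast_eq_sum (continuous_norm_sq_deriv_deriv hX) N).symm

/-- When `accJump (x, v) = 0` the Hermite cubics through `(x, v)` glue to a `C²` curve: its
second derivative is the piecewise linear interpolation of the knot accelerations. -/
lemma exists_contDiff_integral_eq_splineEnergy {x v : Fin (N + 1) → E}
    (hjump : accJump (x, v) = 0) :
    ∃ X : ℝ → E, ContDiff ℝ 2 X ∧ (∀ j : Fin (N + 1), X (j : ℕ) = x j) ∧
      ∫ t in (0:ℝ)..N, ‖deriv (deriv X) t‖ ^ 2 = splineEnergy N x v := by
  obtain ⟨X, hX, hX0, hV0, hX''⟩ :=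
    exists_contDiff_two_deriv_deriv_eq (continuous_hatInterp (accIn x v)) (x 0) (v 0)
  have hacc : ∀ i : Fin N, ∀ t ∈ Set.Icc ((i : ℕ) : ℝ) ((i : ℕ) + 1), deriv (deriv X) t
      = hermiteAcc (x i.castSucc) (x i.succ) (v i.castSucc) (v i.succ) (t - (i : ℕ)) := by
    intro i t ht
    have hinout : accIn x v = accOut x v := sub_eq_zero.1 hjump
    rw [hX'', hatInterp_eq_of_mem_Icc _ i ht, accIn_succ, hinout, accOut_castSucc,
      hermiteAcc_eq _ _ _ _ (t - _)]
  have hknots : ∀ j : Fin (N + 1), X (j : ℕ) = x j ∧ deriv X (j : ℕ) = v j := by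
    intro j
    induction j using Fin.induction with
    | zero => simpa using ⟨hX0, hV0⟩
    | succ i ih =>
      simp only [Fin.val_succ, Nat.cast_add, Nat.cast_one]
      exact endpoint_eq_of_deriv_deriv_eq_hermiteAcc hX ih.1 ih.2 (hacc i)
  refine ⟨X, hX, fun j => (hknots j).1, ?_⟩
  rw [integral_zero_natCast_eq_sum (continuous_norm_sq_deriv_deriv hX)]
  refine Finset.sum_congr rfl fun i _ => ?_
  have hends := And.intro (hknots i.castSucc) (hknots i.succ)
  simp only [Fin.val_castSucc, Fin.val_succ, Nat.cast_add, Nat.cast_one] at hends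
  rw [integral_norm_sq_deriv_deriv_eq_splineCost, hends.1.1, hends.1.2, hends.2.1, hends.2.2]
  simpa only [hends.1.1, hends.1.2, hends.2.1, hends.2.2] using hacc i

lemma multiCost_eq_splineEnergy (hN : N ≠ 0) (x : Fin (N + 1) → E) :
    multiCost N x = splineEnergy N x (optimalVelocity hN x) := by
  obtain ⟨X, hX, hXx, hXE⟩ :=
    exists_contDiff_integral_eq_splineEnergy (accJump_optimalVelocity hN x)
  refine le_antisymm (csInf_le ⟨0, ?_⟩ ⟨X, hX, hXx, hXE.symm⟩) (le_csInf ⟨_, X, hX, hXx, rfl⟩ ?_)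
  · rintro _ ⟨Y, -, -, rfl⟩
    exact intervalIntegral.integral_nonneg (Nat.cast_nonneg N) fun t _ => by positivity
  · rintro _ ⟨Y, hY, hYx, rfl⟩
    exact splineEnergy_optimalVelocity_le_integral hN hY hYx

end NaturalSpline

theorem stmt10_general (d N : ℕ) (hN : 1 ≤ N)
    (ρ : Fin (N + 1) → Measure (EuclideanSpace ℝ (Fin d)))
    (γ : Measure ((Fin (N + 1) → EuclideanSpace ℝ (Fin d)) ×
        (Fin (N + 1) → EuclideanSpace ℝ (Fin d))))
    (hopt : ∀ γ' : Measure ((Fin (N + 1) → EuclideanSpace ℝ (Fin d)) ×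
        (Fin (N + 1) → EuclideanSpace ℝ (Fin d))),
      IsProbabilityMeasure γ' → (∀ i, γ'.map (fun p => p.1 i) = ρ i) →
      (∫⁻ p, ENNReal.ofReal (∑ i : Fin N,
          splineCost (p.1 i.castSucc) (p.1 i.succ) (p.2 i.castSucc) (p.2 i.succ)) ∂γ) ≤
        ∫⁻ p, ENNReal.ofReal (∑ i : Fin N,
          splineCost (p.1 i.castSucc) (p.1 i.succ) (p.2 i.castSucc) (p.2 i.succ)) ∂γ') :
    ∀ π' : Measure (Fin (N + 1) → EuclideanSpace ℝ (Fin d)),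
      IsProbabilityMeasure π' → (∀ i, π'.map (fun y => y i) = ρ i) →
      (∫⁻ y, ENNReal.ofReal (multiCost N y) ∂(γ.map Prod.fst)) ≤
        ∫⁻ y, ENNReal.ofReal (multiCost N y) ∂π' := by
  intro π' _ hπ'
  have hN₀ : N ≠ 0 := by omega
  let V := optimalVelocity (d := d) hN₀
  have hlift : Continuous fun y => (y, V y) :=
    continuous_id.prodMk (LinearMap.continuous_of_finiteDimensional V)
  have henergy : Continuous fun p : (Fin (N + 1) → EuclideanSpace ℝ (Fin d)) ×
      (Fin (N + 1) → EuclideanSpace ℝ (Fin d)) => ENNReal.ofReal (splineEnergy N p.1 p.2) :=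
    ENNReal.continuous_ofReal.comp continuous_splineEnergy
  have hmarg : ∀ i, (π'.map fun y => (y, V y)).map (fun p => p.1 i) = ρ i := fun i => by
    rw [Measure.map_map (measurable_fst.eval (a := i)) hlift.measurable]
    exact hπ' i
  simp only [multiCost_eq_splineEnergy hN₀]
  calc ∫⁻ y, ENNReal.ofReal (splineEnergy N y (V y)) ∂(γ.map Prod.fst)
      = ∫⁻ p, ENNReal.ofReal (splineEnergy N p.1 (V p.1)) ∂γ :=
        lintegral_map (henergy.comp hlift).measurable measurable_fst
    _ ≤ ∫⁻ p, ENNReal.ofReal (splineEnergy N p.1 p.2) ∂γ :=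
        lintegral_mono fun p => ENNReal.ofReal_le_ofReal (splineEnergy_optimalVelocity_le hN₀ _ _)
    _ ≤ ∫⁻ p, ENNReal.ofReal (splineEnergy N p.1 p.2) ∂(π'.map fun y => (y, V y)) :=
        hopt _ (Measure.isProbabilityMeasure_map hlift.aemeasurable) hmarg
    _ = ∫⁻ y, ENNReal.ofReal (splineEnergy N y (V y)) ∂π' :=
        lintegral_map henergy.measurable hlift.measurable

/-- If `γ̂` minimizes the phase-space multimarginal problem over `Γ(ρ₀,…,ρ_N)`, then its
position marginal `π̂ = (X₀,…,X_N)_#γ̂` minimizes `∫ 𝒞 dπ` over `Π(ρ₀,…,ρ_N)`. -/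
theorem stmt10 (d N : ℕ) (hd : 1 ≤ d) (hN : 1 ≤ N)
    (ρ : Fin (N + 1) → Measure (EuclideanSpace ℝ (Fin d)))
    (hprob : ∀ i, IsProbabilityMeasure (ρ i))
    (hmom : ∀ i, (∫⁻ z, ENNReal.ofReal (‖z‖ ^ 2) ∂(ρ i)) < ⊤)
    (γ : Measure ((Fin (N + 1) → EuclideanSpace ℝ (Fin d)) ×
        (Fin (N + 1) → EuclideanSpace ℝ (Fin d))))
    (hγ : IsProbabilityMeasure γ) (hγm : ∀ i, γ.map (fun p => p.1 i) = ρ i)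
    (hopt : ∀ γ' : Measure ((Fin (N + 1) → EuclideanSpace ℝ (Fin d)) ×
        (Fin (N + 1) → EuclideanSpace ℝ (Fin d))),
      IsProbabilityMeasure γ' → (∀ i, γ'.map (fun p => p.1 i) = ρ i) →
      (∫⁻ p, ENNReal.ofReal (∑ i : Fin N,
          splineCost (p.1 i.castSucc) (p.1 i.succ) (p.2 i.castSucc) (p.2 i.succ)) ∂γ) ≤
        ∫⁻ p, ENNReal.ofReal (∑ i : Fin N,
          splineCost (p.1 i.castSucc) (p.1 i.succ) (p.2 i.castSucc) (p.2 i.succ)) ∂γ') :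
    ∀ π' : Measure (Fin (N + 1) → EuclideanSpace ℝ (Fin d)),
      IsProbabilityMeasure π' → (∀ i, π'.map (fun y => y i) = ρ i) →
      (∫⁻ y, ENNReal.ofReal (multiCost N y) ∂(γ.map Prod.fst)) ≤
        ∫⁻ y, ENNReal.ofReal (multiCost N y) ∂π' :=
  stmt10_general d N hN ρ γ hopt
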